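/- (Theorem II.1, spectral form.) Assume (H0) and d₁, d₂, l > 0. Then for every natural number k, every complex root λ of the τ = 0 characteristic equation λ² + (A_k − b₁₁)·λ + (B_k + C_k) = 0 has strictly negative real part. -/

import Mathlib

/-!
At τ = 0 the characteristic polynomial of the k-th mode is det(λ − J_k) for
J_k = [[b₁₁ − d₁q, a₁₂], [a₂₁, a₂₂ − d₂q]], q = k²/l². Since v⋆ is the positive root of a
quadratic with positive leading and negative constant coefficient (this is (H0)), both
equilibrium densities are positive, so b₁₁, a₂₂, a₁₂ < 0 < a₂₁. Hence J_k has negative trace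
and positive determinant, and a real quadratic with positive coefficients has its roots in the
open left half-plane.
-/

open Real

/-- Δ = M² − 4·K·(a·m + c·p)·(a·r₂ + c·d − c·r₀) with M = a·m + c·p + K·(a·r₂ + c·d). -/
noncomputable def Delta (r₀ r₂ K d a p c m : ℝ) : ℝ :=
  (a*m + c*p + K*(a*r₂ + c*d))^2 - 4*K*(a*m + c*p)*(a*r₂ + c*d - c*r₀)

/-- The positive equilibrium predator density v⋆. -/
noncomputable def vstar (r₀ r₂ K d a p c m : ℝ) : ℝ :=
  (-(a*m + c*p + K*(a*r₂ + c*d)) + Real.sqrt (Delta r₀ r₂ K d a p c m)) / (2*K*(a*m + c*p))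

/-- The positive equilibrium prey density u⋆ = (r₂ + m·v⋆)/c. -/
noncomputable def ustar (r₀ r₂ K d a p c m : ℝ) : ℝ := (r₂ + m * vstar r₀ r₂ K d a p c m) / c

/-- Linearization coefficient a₁₂. -/
noncomputable def a12 (r₀ r₂ K d a p c m : ℝ) : ℝ :=
  -K*r₀*ustar r₀ r₂ K d a p c m / (1 + K*vstar r₀ r₂ K d a p c m)^2 - p*ustar r₀ r₂ K d a p c m

/-- Linearization coefficient a₂₁. -/
noncomputable def a21 (r₀ r₂ K d a p c m : ℝ) : ℝ := c * vstar r₀ r₂ K d a p c m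

/-- Linearization coefficient a₂₂. -/
noncomputable def a22 (r₀ r₂ K d a p c m : ℝ) : ℝ := -m * vstar r₀ r₂ K d a p c m

/-- Linearization coefficient b₁₁. -/
noncomputable def b11 (r₀ r₂ K d a p c m : ℝ) : ℝ := -a * ustar r₀ r₂ K d a p c m

/-- A_k = (d₁ + d₂)·k²/l² − a₂₂. -/
noncomputable def Ak (r₀ r₂ K d a p c m d₁ d₂ l : ℝ) (k : ℕ) : ℝ :=
  (d₁ + d₂)*(k:ℝ)^2/l^2 - a22 r₀ r₂ K d a p c m

/-- B_k = d₁·d₂·k⁴/l⁴ − a₂₂·d₁·k²/l² − a₁₂·a₂₁. -/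
noncomputable def Bk (r₀ r₂ K d a p c m d₁ d₂ l : ℝ) (k : ℕ) : ℝ :=
  d₁*d₂*(k:ℝ)^4/l^4 - a22 r₀ r₂ K d a p c m * d₁*(k:ℝ)^2/l^2 - a12 r₀ r₂ K d a p c m * a21 r₀ r₂ K d a p c m

/-- C_k = −b₁₁·d₂·k²/l² + a₂₂·b₁₁. -/
noncomputable def Ck (r₀ r₂ K d a p c m d₁ d₂ l : ℝ) (k : ℕ) : ℝ :=
  -(b11 r₀ r₂ K d a p c m)*d₂*(k:ℝ)^2/l^2 + a22 r₀ r₂ K d a p c m * b11 r₀ r₂ K d a p c m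

theorem re_neg_of_sq_add_mul_add_eq_zero {B C : ℝ} (hB : 0 < B) (hC : 0 < C) {z : ℂ}
    (hz : z ^ 2 + (B : ℂ) * z + (C : ℂ) = 0) : z.re < 0 := by
  have hre := congrArg Complex.re hz
  have him := congrArg Complex.im hz
  simp only [Complex.add_re, Complex.add_im, Complex.mul_re, Complex.mul_im, pow_two,
    Complex.ofReal_re, Complex.ofReal_im, Complex.zero_re, Complex.zero_im] at hre him
  have him' : z.im * (2 * z.re + B) = 0 := by linarith
  rcases mul_eq_zero.mp him' with hreal | hvertex
  · rw [hreal] at hre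
    by_contra! hnonneg
    nlinarith
  · linarith

theorem neg_add_sqrt_discrim_div_pos {α b γ : ℝ} (hα : 0 < α) (hγ : γ < 0) :
    0 < (-b + √(b ^ 2 - 4 * α * γ)) / (2 * α) := by
  have hb : b < √(b ^ 2 - 4 * α * γ) := lt_sqrt_of_sq_lt (by nlinarith)
  exact div_pos (by linarith) (by positivity)

section Equilibrium

variable {r₀ r₂ K d a p c m : ℝ}

theorem vstar_pos (hK : 0 < K) (ha : 0 < a) (hp : 0 < p) (hc : 0 < c) (hm : 0 < m)
    (hH0 : a*r₂ + c*d - c*r₀ < 0) : 0 < vstar r₀ r₂ K d a p c m := by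
  have key := neg_add_sqrt_discrim_div_pos (b := a*m + c*p + K*(a*r₂ + c*d))
    (mul_pos hK (by positivity : 0 < a*m + c*p)) hH0
  unfold vstar Delta
  rwa [mul_assoc 4 K, mul_assoc 2 K]

theorem ustar_pos (hr₂ : 0 < r₂) (hc : 0 < c) (hm : 0 < m)
    (hv : 0 < vstar r₀ r₂ K d a p c m) : 0 < ustar r₀ r₂ K d a p c m :=
  div_pos (by positivity) hc

theorem a12_neg (hr₀ : 0 < r₀) (hK : 0 < K) (hp : 0 < p)
    (hu : 0 < ustar r₀ r₂ K d a p c m) : a12 r₀ r₂ K d a p c m < 0 := by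
  unfold a12
  have hfirst : 0 ≤ K*r₀*ustar r₀ r₂ K d a p c m / (1 + K*vstar r₀ r₂ K d a p c m)^2 := by
    positivity
  have hsecond : 0 < p * ustar r₀ r₂ K d a p c m := mul_pos hp hu
  rw [neg_mul, neg_mul, neg_div]
  linarith

theorem a21_pos (hc : 0 < c) (hv : 0 < vstar r₀ r₂ K d a p c m) :
    0 < a21 r₀ r₂ K d a p c m :=
  mul_pos hc hv

theorem a22_neg (hm : 0 < m) (hv : 0 < vstar r₀ r₂ K d a p c m) :
    a22 r₀ r₂ K d a p c m < 0 := by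
  unfold a22
  rw [neg_mul]
  exact neg_neg_of_pos (mul_pos hm hv)

theorem b11_neg (ha : 0 < a) (hu : 0 < ustar r₀ r₂ K d a p c m) :
    b11 r₀ r₂ K d a p c m < 0 := by
  unfold b11
  rw [neg_mul]
  exact neg_neg_of_pos (mul_pos ha hu)

end Equilibrium

section Modes

variable (r₀ r₂ K d a p c m d₁ d₂ l : ℝ) (k : ℕ)

theorem Ak_sub_b11_eq_neg_trace :
    Ak r₀ r₂ K d a p c m d₁ d₂ l k - b11 r₀ r₂ K d a p c m =
      (d₁ * ((k:ℝ)^2/l^2) - b11 r₀ r₂ K d a p c m) +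
        (d₂ * ((k:ℝ)^2/l^2) - a22 r₀ r₂ K d a p c m) := by
  unfold Ak
  ring

theorem Bk_add_Ck_eq_det :
    Bk r₀ r₂ K d a p c m d₁ d₂ l k + Ck r₀ r₂ K d a p c m d₁ d₂ l k =
      (d₁ * ((k:ℝ)^2/l^2) - b11 r₀ r₂ K d a p c m) *
        (d₂ * ((k:ℝ)^2/l^2) - a22 r₀ r₂ K d a p c m) -
          a12 r₀ r₂ K d a p c m * a21 r₀ r₂ K d a p c m := by
  unfold Bk Ck
  ring

end Modes

theorem stmt5_general (r₀ r₂ K d a p c m d₁ d₂ l : ℝ) (hr₀ : 0 < r₀) (hr₂ : 0 < r₂) (hK : 0 < K) (ha : 0 < a) (hp : 0 < p) (hc : 0 < c) (hm : 0 < m)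
    (hd₁ : 0 < d₁) (hd₂ : 0 < d₂)
    (hH0 : a*r₂ + c*d - c*r₀ < 0) :
    ∀ (k : ℕ) (z : ℂ),
      z^2 + ((Ak r₀ r₂ K d a p c m d₁ d₂ l k - b11 r₀ r₂ K d a p c m : ℝ) : ℂ)*z + ((Bk r₀ r₂ K d a p c m d₁ d₂ l k + Ck r₀ r₂ K d a p c m d₁ d₂ l k : ℝ) : ℂ) = 0 →
      z.re < 0 := by
  intro k z hz
  have hv := vstar_pos hK ha hp hc hm hH0
  have hu := ustar_pos hr₂ hc hm hv
  have hq : 0 ≤ (k:ℝ)^2/l^2 := by positivity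
  have hprey : 0 < d₁ * ((k:ℝ)^2/l^2) - b11 r₀ r₂ K d a p c m := by
    nlinarith [b11_neg ha hu]
  have hpred : 0 < d₂ * ((k:ℝ)^2/l^2) - a22 r₀ r₂ K d a p c m := by
    nlinarith [a22_neg hm hv]
  refine re_neg_of_sq_add_mul_add_eq_zero ?_ ?_ hz
  · rw [Ak_sub_b11_eq_neg_trace]
    exact add_pos hprey hpred
  · rw [Bk_add_Ck_eq_det]
    nlinarith [mul_pos hprey hpred, mul_neg_of_neg_of_pos (a12_neg hr₀ hK hp hu) (a21_pos hc hv)]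

theorem stmt5 (r₀ r₂ K d a p c m d₁ d₂ l : ℝ) (hr₀ : 0 < r₀) (hr₂ : 0 < r₂) (hK : 0 < K) (hd : 0 < d) (ha : 0 < a) (hp : 0 < p) (hc : 0 < c) (hm : 0 < m)
    (hd₁ : 0 < d₁) (hd₂ : 0 < d₂) (hl : 0 < l)
    (hH0 : a*r₂ + c*d - c*r₀ < 0) :
    ∀ (k : ℕ) (z : ℂ),
      z^2 + ((Ak r₀ r₂ K d a p c m d₁ d₂ l k - b11 r₀ r₂ K d a p c m : ℝ) : ℂ)*z + ((Bk r₀ r₂ K d a p c m d₁ d₂ l k + Ck r₀ r₂ K d a p c m d₁ d₂ l k : ℝ) : ℂ) = 0 →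
      z.re < 0 :=
  stmt5_general r₀ r₂ K d a p c m d₁ d₂ l hr₀ hr₂ hK ha hp hc hm hd₁ hd₂ hH0
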